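/- arXiv:math/0702001 — 4 statements merged into one kernel-verified Lean document; each statement's English description precedes it below -/
import Mathlib

section
/- Let R be a unital (not necessarily commutative) ring and let c, d ∈ R. Then the 2×2 matrix over R given by P = [[c(2−dc)d, c(2−dc)(1−dc)], [(1−dc)d, (1−dc)²]] is idempotent, i.e. P·P = P in the ring of 2×2 matrices over R. -/
/-- For any unital ring `R` and `c d : R`, the Milnor idempotent
`P = [[c(2−dc)d, c(2−dc)(1−dc)], [(1−dc)d, (1−dc)²]]` satisfies `P * P = P`. -/
theorem milnor_idempotent {R : Type*} [Ring R] (c d : R) :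
    (!![c * (2 - d * c) * d, c * (2 - d * c) * (1 - d * c);
        (1 - d * c) * d, (1 - d * c) ^ 2] : Matrix (Fin 2) (Fin 2) R) *
      !![c * (2 - d * c) * d, c * (2 - d * c) * (1 - d * c);
        (1 - d * c) * d, (1 - d * c) ^ 2] =
    !![c * (2 - d * c) * d, c * (2 - d * c) * (1 - d * c);
        (1 - d * c) * d, (1 - d * c) ^ 2] := by
  ext i j
  fin_cases i <;> fin_cases j <;>
    simp [Matrix.mul_apply, Fin.sum_univ_two] <;> noncomm_ring
end

section
/- Fix a real number q with 0 < q ≤ 1. Let A be a unital C*-algebra and let α, β ∈ A satisfy the SU_q(2) relations: α·β = q·β·α, α·β* = q·β*·α, β·β* = β*·β, α*·α + β·β* = 1, α·α* + q²·β·β* = 1. Define continuous functions ᾱ, β̄ : [0,1] → A by ᾱ(t) = α and β̄(t) = β for 0 ≤ t ≤ 1/2, and ᾱ(t) = (2t−1)·1 + 2(1−t)·α, β̄(t) = 2(1−t)·β for 1/2 ≤ t ≤ 1. For t ∈ [0,1] let c(t) = [[ᾱ(t), −q·β̄(t)*], [β̄(t), ᾱ(t)*]] and d(t) = [[ᾱ(t)*,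 β̄(t)*], [−q·β̄(t), ᾱ(t)]] in M₂(A), and for n ∈ ℕ define p_n(t) ∈ M₄(A) as the 2×2 block matrix [[c(t)ⁿ(2−d(t)ⁿc(t)ⁿ)d(t)ⁿ, c(t)ⁿ(2−d(t)ⁿc(t)ⁿ)(1−d(t)ⁿc(t)ⁿ)], [(1−d(t)ⁿc(t)ⁿ)d(t)ⁿ, (1−d(t)ⁿc(t)ⁿ)²]]. Then for every n ∈ ℕ and every t ∈ [0,1] one has p_n(t)·p_n(t) = p_n(t); moreover p_n(t) = diag(1,1,0,0) for all t ∈ [0,1/2] and p_n(1) = diag(1,1,0,0), so in particular p_n(0) and p_n(1) are scalar matrices. -/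
theorem blockIdem {R m : Type*} [Ring R] [Fintype m] [DecidableEq m]
    (x y : Matrix m m R) :
    Matrix.fromBlocks (x * (2 - y * x) * y) (x * (2 - y * x) * (1 - y * x))
        ((1 - y * x) * y) ((1 - y * x) ^ 2) *
      Matrix.fromBlocks (x * (2 - y * x) * y) (x * (2 - y * x) * (1 - y * x))
        ((1 - y * x) * y) ((1 - y * x) ^ 2) =
    Matrix.fromBlocks (x * (2 - y * x) * y) (x * (2 - y * x) * (1 - y * x))
        ((1 - y * x) * y) ((1 - y * x) ^ 2) := by
  rw [Matrix.fromBlocks_multiply]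
  noncomm_ring

theorem pow_mul_pow_one {M : Type*} [Monoid M] {d c : M} (h : d * c = 1) (n : ℕ) :
    d ^ n * c ^ n = 1 := by
  induction n with
  | zero => simp
  | succ k ih =>
    rw [pow_succ d, pow_succ' c, mul_assoc, ← mul_assoc d c (c ^ k), h, one_mul, ih]



noncomputable section

/-- The path `ᾱ : [0,1] → A`: equal to `α` on `[0,1/2]` and to
`(2t−1)·1 + 2(1−t)·α` on `[1/2,1]`. -/
def alphaBar {A : Type*} [Ring A] [Algebra ℂ A] (α : A) (t : ℝ) : A :=
  if t ≤ 1 / 2 then α else ((2 * t - 1 : ℝ) : ℂ) • (1 : A) + ((2 * (1 - t) : ℝ) : ℂ) • α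

/-- The path `β̄ : [0,1] → A`: equal to `β` on `[0,1/2]` and to `2(1−t)·β` on `[1/2,1]`. -/
def betaBar {A : Type*} [Ring A] [Algebra ℂ A] (β : A) (t : ℝ) : A :=
  if t ≤ 1 / 2 then β else ((2 * (1 - t) : ℝ) : ℂ) • β

/-- The lift `c(t) = [[ᾱ(t), −q β̄(t)*],[β̄(t), ᾱ(t)*]] ∈ M₂(A)`. -/
def cLift {A : Type*} [Ring A] [StarRing A] [Algebra ℂ A] (q : ℝ) (α β : A) (t : ℝ) :
    Matrix (Fin 2) (Fin 2) A :=
  !![alphaBar α t, -((q : ℂ) • star (betaBar β t)); betaBar β t, star (alphaBar α t)]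

/-- The lift `d(t) = [[ᾱ(t)*, β̄(t)*],[−q β̄(t), ᾱ(t)]] ∈ M₂(A)`. -/
def dLift {A : Type*} [Ring A] [StarRing A] [Algebra ℂ A] (q : ℝ) (α β : A) (t : ℝ) :
    Matrix (Fin 2) (Fin 2) A :=
  !![star (alphaBar α t), star (betaBar β t); -((q : ℂ) • betaBar β t), alphaBar α t]

/-- The instanton projection of charge `−n`, as a `2×2` block matrix (i.e. an element of
`M₄(A)`):
`p_n(t) = [[cⁿ(2−dⁿcⁿ)dⁿ, cⁿ(2−dⁿcⁿ)(1−dⁿcⁿ)],[(1−dⁿcⁿ)dⁿ, (1−dⁿcⁿ)²]]`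
with `c = c(t)`, `d = d(t)`. -/
def instantonProj {A : Type*} [Ring A] [StarRing A] [Algebra ℂ A] (q : ℝ) (α β : A)
    (n : ℕ) (t : ℝ) : Matrix (Fin 2 ⊕ Fin 2) (Fin 2 ⊕ Fin 2) A :=
  Matrix.fromBlocks
    (cLift q α β t ^ n * (2 - dLift q α β t ^ n * cLift q α β t ^ n) * dLift q α β t ^ n)
    (cLift q α β t ^ n * (2 - dLift q α β t ^ n * cLift q α β t ^ n) *
      (1 - dLift q α β t ^ n * cLift q α β t ^ n))
    ((1 - dLift q α β t ^ n * cLift q α β t ^ n) * dLift q α β t ^ n)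
    ((1 - dLift q α β t ^ n * cLift q α β t ^ n) ^ 2)

/-- Let `0 < q ≤ 1`, let `A` be a unital C*-algebra and `α, β ∈ A`
satisfy the `SU_q(2)` relations.  Then `ᾱ, β̄ : [0,1] → A` are continuous, and for every
`n : ℕ` the matrix-valued function `p_n` is idempotent at every `t ∈ [0,1]`, equals
`diag(1,1,0,0)` for `t ∈ [0,1/2]`, and equals `diag(1,1,0,0)` at `t = 1`; in particular
`p_n(0)` and `p_n(1)` are scalar matrices. -/
theorem instanton_projection_idempotent (q : ℝ) (hq0 : 0 < q) (hq1 : q ≤ 1)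
    {A : Type*} [NormedRing A] [StarRing A] [CStarRing A] [NormedAlgebra ℂ A]
    [StarModule ℂ A] [CompleteSpace A] (α β : A)
    (h1 : α * β = (q : ℂ) • (β * α))
    (h2 : α * star β = (q : ℂ) • (star β * α))
    (h3 : β * star β = star β * β)
    (h4 : star α * α + β * star β = 1)
    (h5 : α * star α + ((q : ℂ) ^ 2) • (β * star β) = 1) :
    Continuous (alphaBar α) ∧ Continuous (betaBar β) ∧
      ∀ n : ℕ,
        (∀ t ∈ Set.Icc (0 : ℝ) 1,
          instantonProj q α β n t * instantonProj q α β n t = instantonProj q α β n t) ∧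
        (∀ t ∈ Set.Icc (0 : ℝ) (1 / 2),
          instantonProj q α β n t = Matrix.fromBlocks 1 0 0 0) ∧
        instantonProj q α β n 1 = Matrix.fromBlocks 1 0 0 0 := by
  -- star of q
  have hqs : star ((q : ℂ)) = (q : ℂ) := by
    simp [Complex.star_def, Complex.conj_ofReal]
  -- starred relations
  have h1s : star β * star α = (q : ℂ) • (star α * star β) := by
    have := congrArg star h1
    simpa [star_mul, star_smul, hqs] using this
  have h2s : β * star α = (q : ℂ) • (star α * β) := by
    have := congrArg star h2
    simpa [star_mul, star_smul, hqs] using this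
  have h21 : (2 - 1 : Matrix (Fin 2) (Fin 2) A) = 1 := by norm_num
  have hαt : ∀ t : ℝ, t ≤ 1 / 2 → alphaBar α t = α := fun t ht => if_pos ht
  have hβt : ∀ t : ℝ, t ≤ 1 / 2 → betaBar β t = β := fun t ht => if_pos ht
  have hdc1 : ∀ t : ℝ, t ≤ 1 / 2 → dLift q α β t * cLift q α β t = 1 := by
    intro t ht
    rw [dLift, cLift, hαt t ht, hβt t ht, Matrix.mul_fin_two]
    rw [show star α * α + star β * β = 1 by rw [← h3]; exact h4]
    rw [show star α * -((q:ℂ) • star β) + star β * star α = 0 by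
      rw [h1s, mul_neg, mul_smul_comm]; exact neg_add_cancel _]
    rw [show -((q:ℂ) • β) * α + α * β = 0 by
      rw [h1, neg_mul, smul_mul_assoc]; exact neg_add_cancel _]
    rw [show -((q:ℂ) • β) * -((q:ℂ) • star β) + α * star α = 1 by
      rw [neg_mul_neg, smul_mul_assoc, mul_smul_comm, smul_smul, ← pow_two, add_comm]
      exact h5]
    exact Matrix.one_fin_two.symm
  have hcd1 : ∀ t : ℝ, t ≤ 1 / 2 → cLift q α β t * dLift q α β t = 1 := by
    intro t ht
    rw [dLift, cLift, hαt t ht, hβt t ht, Matrix.mul_fin_two]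
    rw [show α * star α + -((q:ℂ) • star β) * -((q:ℂ) • β) = 1 by
      rw [neg_mul_neg, smul_mul_assoc, mul_smul_comm, smul_smul, ← pow_two, ← h3]
      exact h5]
    rw [show α * star β + -((q:ℂ) • star β) * α = 0 by
      rw [h2, neg_mul, smul_mul_assoc]; exact add_neg_cancel _]
    rw [show β * star α + star α * -((q:ℂ) • β) = 0 by
      rw [h2s, mul_neg, mul_smul_comm]; exact add_neg_cancel _]
    rw [show β * star β + star α * α = 1 by rw [add_comm]; exact h4]
    exact Matrix.one_fin_two.symm
  have hα1 : alphaBar α (1 : ℝ) = 1 := by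
    rw [alphaBar, if_neg (by norm_num)]
    norm_num
  have hβ1 : betaBar β (1 : ℝ) = 0 := by
    rw [betaBar, if_neg (by norm_num)]
    norm_num
  have hc1 : cLift q α β 1 = 1 := by
    rw [cLift, hα1, hβ1, star_zero, star_one, smul_zero, neg_zero]
    exact Matrix.one_fin_two.symm
  have hd1 : dLift q α β 1 = 1 := by
    rw [dLift, hα1, hβ1, star_zero, star_one, smul_zero, neg_zero]
    exact Matrix.one_fin_two.symm
  refine ⟨?_, ?_, ?_⟩
  · unfold alphaBar
    apply Continuous.if_le
    · exact continuous_const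
    · fun_prop
    · exact continuous_id
    · exact continuous_const
    · intro t ht
      rw [ht]
      norm_num
  · unfold betaBar
    apply Continuous.if_le
    · exact continuous_const
    · fun_prop
    · exact continuous_id
    · exact continuous_const
    · intro t ht
      rw [ht]
      norm_num
  · intro n
    refine ⟨fun t _ => blockIdem _ _, fun t ht => ?_, ?_⟩
    · have hd : dLift q α β t ^ n * cLift q α β t ^ n = 1 :=
        pow_mul_pow_one (hdc1 t ht.2) n
      have hc : cLift q α β t ^ n * dLift q α β t ^ n = 1 :=
        pow_mul_pow_one (hcd1 t ht.2) n
      rw [instantonProj, hd, h21]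
      simp [hc]
    · have hd : dLift q α β (1:ℝ) ^ n * cLift q α β 1 ^ n = 1 := by
        rw [hc1, hd1]; simp
      rw [instantonProj, hd, h21]
      simp [hc1, hd1]
end
end

section
/- Let R be a unital (not necessarily commutative) ring and let c, d ∈ R. Then the 2×2 matrices C = [[(2−cd)c, cd−1], [1−dc, d]] and D = [[d, 1−dc], [cd−1, (2−cd)c]] over R satisfy C·D = 1 and D·C = 1; in particular C is invertible in M₂(R) with inverse D. -/
/-- For any unital ring `R` and `c d : R`, the matrices
`C = [[(2−cd)c, cd−1],[1−dc, d]]` and `D = [[d, 1−dc],[cd−1, (2−cd)c]]` are mutually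
inverse in `M₂(R)`. -/
theorem whitehead_lift_invertible {R : Type*} [Ring R] (c d : R) :
    (!![(2 - c * d) * c, c * d - 1; 1 - d * c, d] : Matrix (Fin 2) (Fin 2) R) *
        !![d, 1 - d * c; c * d - 1, (2 - c * d) * c] = 1 ∧
      (!![d, 1 - d * c; c * d - 1, (2 - c * d) * c] : Matrix (Fin 2) (Fin 2) R) *
        !![(2 - c * d) * c, c * d - 1; 1 - d * c, d] = 1 := by
  constructor <;>
  · ext i j
    fin_cases i <;> fin_cases j <;>
      simp [Matrix.mul_apply, Fin.sum_univ_two, Matrix.one_apply] <;> noncomm_ring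
end

section
/- Fix a real number q. Let A be a unital complex star algebra, let α, β, F ∈ A with F* = F and F·α = α·F, and set f = F·β − β·F. Let U = [[α, −q·β*], [β, α*]] and V = [[α*, β*], [−q·β, α]] in M₂(A), and let F̃ = [[F, 0], [0, F]]. Then (F̃·U − U·F̃)·(F̃·V − V·F̃) = [[−q²·f*·f, 0], [0, −f·f*]] in M₂(A). -/
/-!
Since `F` commutes with `α` and, being self-adjoint, with `α*`, the commutators `[F̃, U]` and
`[F̃, V]` are off-diagonal, with entries `q f*, f` and `-f*, -q f` (using `f* = -(F β* - β* F)`).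
A product of two off-diagonal `2 × 2` matrices is diagonal, which gives the claim.
-/

open Matrix

theorem diagonal_mul_sub_mul_diagonal_fin_two {R : Type*} [Ring R] (F a b c d : R) :
    !![F, 0; 0, F] * !![a, b; c, d] - !![a, b; c, d] * !![F, 0; 0, F] =
      !![F * a - a * F, F * b - b * F; F * c - c * F, F * d - d * F] := by
  simp [of_sub_of]

theorem mul_smul_sub_smul_mul {R A : Type*} [CommSemiring R] [Ring A] [Algebra R A]
    (F x : A) (c : R) :
    F * (c • x) - c • x * F = c • (F * x - x * F) := by
  rw [mul_smul_comm, smul_mul_assoc, smul_sub]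

theorem mul_neg_sub_neg_mul {R : Type*} [Ring R] (F x : R) :
    F * -x - -x * F = -(F * x - x * F) := by
  rw [mul_neg, neg_mul, neg_sub_neg, neg_sub]

theorem star_mul_sub_mul_of_star_eq {R : Type*} [Ring R] [StarRing R] {F : R}
    (hF : star F = F) (x : R) : star (F * x - x * F) = -(F * star x - star x * F) := by
  rw [star_sub, star_mul, star_mul, hF, neg_sub]

theorem commutator_product_identity_general {A : Type*} [Ring A] [StarRing A] [Algebra ℂ A]
    (q : ℝ) (α β F : A) (hF : star F = F) (hFα : F * α = α * F) :
    (!![F, 0; 0, F] * !![α, -((q : ℂ) • star β); β, star α] -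
          !![α, -((q : ℂ) • star β); β, star α] * !![F, 0; 0, F]) *
        (!![F, 0; 0, F] * !![star α, star β; -((q : ℂ) • β), α] -
          !![star α, star β; -((q : ℂ) • β), α] * !![F, 0; 0, F]) =
      (!![-(((q : ℂ) ^ 2) • (star (F * β - β * F) * (F * β - β * F))), 0;
          0, -((F * β - β * F) * star (F * β - β * F))] : Matrix (Fin 2) (Fin 2) A) := by
  have hα : F * α - α * F = 0 := sub_eq_zero.2 hFα
  have hαstar : F * star α - star α * F = 0 := by
    simpa only [hF, sub_eq_zero] using (Commute.star_star hFα).eq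
  have hβstar : F * star β - star β * F = -star (F * β - β * F) := by
    rw [star_mul_sub_mul_of_star_eq hF, neg_neg]
  rw [diagonal_mul_sub_mul_diagonal_fin_two, diagonal_mul_sub_mul_diagonal_fin_two, hα, hαstar,
    mul_neg_sub_neg_mul, mul_neg_sub_neg_mul, mul_smul_sub_smul_mul, mul_smul_sub_smul_mul, hβstar,
    mul_fin_two]
  simp only [mul_zero, zero_mul, add_zero, zero_add, mul_neg, smul_neg, neg_neg, neg_zero,
    smul_mul_smul_comm, sq]

/-- Let `A` be a unital complex star algebra, `q : ℝ`, and let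
`α, β, F ∈ A` with `F* = F` and `Fα = αF`. Set `f = Fβ − βF`,
`U = [[α, −qβ*],[β, α*]]`, `V = [[α*, β*],[−qβ, α]]`, `F̃ = [[F,0],[0,F]]`. Then
`(F̃U − UF̃)(F̃V − VF̃) = [[−q² f* f, 0],[0, −f f*]]`. -/
theorem commutator_product_identity {A : Type*} [Ring A] [StarRing A] [Algebra ℂ A]
    [StarModule ℂ A] (q : ℝ) (α β F : A) (hF : star F = F) (hFα : F * α = α * F) :
    (!![F, 0; 0, F] * !![α, -((q : ℂ) • star β); β, star α] -
          !![α, -((q : ℂ) • star β); β, star α] * !![F, 0; 0, F]) *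
        (!![F, 0; 0, F] * !![star α, star β; -((q : ℂ) • β), α] -
          !![star α, star β; -((q : ℂ) • β), α] * !![F, 0; 0, F]) =
      (!![-(((q : ℂ) ^ 2) • (star (F * β - β * F) * (F * β - β * F))), 0;
          0, -((F * β - β * F) * star (F * β - β * F))] : Matrix (Fin 2) (Fin 2) A) :=
  commutator_product_identity_general q α β F hF hFα
end
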